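/- Let A be a ⊖-algebra with negation ¬a := 1 ⊖ a and define a ⊕ b := ¬(¬a ⊖ b). Then the following are equivalent: (1) for all a, b, c ∈ A: ¬¬a = a, a ⊕ b = b ⊕ a, (a ⊕ b) ⊕ c = a ⊕ (b ⊕ c), and ⊖ is the right co-residual of ⊕ (a ≤ b ⊕ c if and only if a ⊖ c ≤ b); (2) for all prime ideals x, y, z of A: (i) i(i(x)) = x; (ii) if (x,y) ∈ dom(+) and (y,x) ∈ dom(+), then x + y = y + x; (iii) if (x,y), (y,z), (x, y+z), (x+y, z) all lie in dom(+), then x + (y + z) = (x + y) + z; (iv) if (i(x), y) ∈ dom(+) and (z, y) ∈ dom(+), then i(x) + y ⊆ i(z) if and only if z + y ⊆ x. -/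
import Mathlib

class OminusAlgebra (A : Type*) extends DistribLattice A, BoundedOrder A where
  ominus : A → A → A
  inf_ominus : ∀ a b c : A, ominus (a ⊓ b) c = ominus a c ⊓ ominus b c
  sup_ominus : ∀ a b c : A, ominus (a ⊔ b) c = ominus a c ⊔ ominus b c
  ominus_inf : ∀ a b c : A, ominus a (b ⊓ c) = ominus a b ⊔ ominus a c
  ominus_sup : ∀ a b c : A, ominus a (b ⊔ c) = ominus a b ⊓ ominus a c
  bot_ominus : ∀ a : A, ominus ⊥ a = ⊥
  ominus_top : ∀ a : A, ominus a ⊤ = ⊥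
  ominus_bot : ∀ a : A, ominus a ⊥ = a

infixl:65 " ⊖ " => OminusAlgebra.ominus

variable {A : Type*} [OminusAlgebra A]

def oneg (a : A) : A := ⊤ ⊖ a

def oplus (a b : A) : A := oneg (oneg a ⊖ b)

def IsPrimeIdeal (x : Set A) : Prop :=
  x.Nonempty ∧ (∀ a b : A, a ≤ b → b ∈ x → a ∈ x) ∧
    (∀ a b : A, a ∈ x → b ∈ x → a ⊔ b ∈ x) ∧ x ≠ Set.univ ∧
    (∀ a b : A, a ⊓ b ∈ x → a ∈ x ∨ b ∈ x)

def ineg (x : Set A) : Set A := {a | oneg a ∉ x}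

def domPlus (x y : Set A) : Prop := y ⊆ ineg x

def pplus (x y : Set A) : Set A := {a | ∃ b ∈ y, a ⊖ b ∈ x}

def domStar (x y : Set A) : Prop := ¬ ineg x ⊆ y

def pstar (x y : Set A) : Set A := {a | ∀ b ∉ y, a ⊖ b ∈ x}

section Aux

open OminusAlgebra

lemma om_mono {a b : A} (h : a ≤ b) (c : A) : a ⊖ c ≤ b ⊖ c := by
  have : (a ⊔ b) ⊖ c = (a ⊖ c) ⊔ (b ⊖ c) := sup_ominus a b c
  rw [sup_eq_right.mpr h] at this
  rw [this]; exact le_sup_left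

lemma om_anti (a : A) {b c : A} (h : b ≤ c) : a ⊖ c ≤ a ⊖ b := by
  have : a ⊖ (b ⊔ c) = (a ⊖ b) ⊓ (a ⊖ c) := ominus_sup a b c
  rw [sup_eq_right.mpr h] at this
  rw [this]; exact inf_le_left

lemma om_le_left (a b : A) : a ⊖ b ≤ a := by
  have := om_anti a (bot_le : (⊥ : A) ≤ b)
  rwa [ominus_bot] at this

lemma om_le_oneg (a b : A) : a ⊖ b ≤ oneg b := om_mono le_top b

lemma oneg_anti {a b : A} (h : a ≤ b) : oneg b ≤ oneg a := om_anti ⊤ h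

lemma oneg_bot : oneg (⊥ : A) = ⊤ := ominus_bot ⊤

lemma oneg_top : oneg (⊤ : A) = ⊥ := ominus_top ⊤

lemma oneg_inf (a b : A) : oneg (a ⊓ b) = oneg a ⊔ oneg b := ominus_inf ⊤ a b

lemma oneg_sup (a b : A) : oneg (a ⊔ b) = oneg a ⊓ oneg b := ominus_sup ⊤ a b

lemma oplus_mono_left {a b : A} (h : a ≤ b) (c : A) : oplus a c ≤ oplus b c :=
  oneg_anti (om_mono (oneg_anti h) c)

lemma oplus_mono_right (a : A) {b c : A} (h : b ≤ c) : oplus a b ≤ oplus a c :=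
  oneg_anti (om_anti (oneg a) h)

lemma oplus_inf_left (a b c : A) : oplus (a ⊓ b) c = oplus a c ⊓ oplus b c := by
  unfold oplus
  rw [oneg_inf, sup_ominus, oneg_sup]

lemma oplus_inf_right (a b c : A) : oplus a (b ⊓ c) = oplus a b ⊓ oplus a c := by
  unfold oplus
  rw [ominus_inf, oneg_sup]

lemma oplus_top (a : A) : oplus a ⊤ = ⊤ := by
  unfold oplus; rw [ominus_top, oneg_bot]

lemma top_oplus (a : A) : oplus ⊤ a = ⊤ := by
  unfold oplus; rw [oneg_top, bot_ominus, oneg_bot]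

-- prime ideal basics

lemma prime_down {x : Set A} (hx : IsPrimeIdeal x) {a b : A} (h : a ≤ b) (hb : b ∈ x) : a ∈ x :=
  hx.2.1 a b h hb

lemma prime_join {x : Set A} (hx : IsPrimeIdeal x) {a b : A} (ha : a ∈ x) (hb : b ∈ x) :
    a ⊔ b ∈ x := hx.2.2.1 a b ha hb

lemma prime_split {x : Set A} (hx : IsPrimeIdeal x) {a b : A} (h : a ⊓ b ∈ x) :
    a ∈ x ∨ b ∈ x := hx.2.2.2.2 a b h

lemma prime_bot_mem {x : Set A} (hx : IsPrimeIdeal x) : (⊥ : A) ∈ x := by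
  obtain ⟨a, ha⟩ := hx.1
  exact prime_down hx bot_le ha

lemma prime_top_not_mem {x : Set A} (hx : IsPrimeIdeal x) : (⊤ : A) ∉ x := by
  intro h
  exact hx.2.2.2.1 (Set.eq_univ_of_forall fun a => prime_down hx le_top h)

lemma mem_ineg {x : Set A} {a : A} : a ∈ ineg x ↔ oneg a ∉ x := Iff.rfl

lemma ineg_prime {x : Set A} (hx : IsPrimeIdeal x) : IsPrimeIdeal (ineg x) := by
  refine ⟨⟨⊥, ?_⟩, ?_, ?_, ?_, ?_⟩
  · rw [mem_ineg, oneg_bot]; exact prime_top_not_mem hx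
  · intro a b h hb hc
    exact hb (prime_down hx (oneg_anti h) hc)
  · intro a b ha hb h
    rw [mem_ineg] at ha hb
    rw [oneg_sup] at h
    rcases prime_split hx h with h1 | h1
    exacts [ha h1, hb h1]
  · intro h
    have : (⊤ : A) ∈ ineg x := h ▸ Set.mem_univ ⊤
    rw [mem_ineg, oneg_top] at this
    exact this (prime_bot_mem hx)
  · intro a b h
    by_contra hc
    push_neg at hc
    have ha : oneg a ∈ x := not_not.mp hc.1
    have hb : oneg b ∈ x := not_not.mp hc.2
    exact h (oneg_inf a b ▸ prime_join hx ha hb)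

-- separation

lemma exists_prime_avoid (F : Set A) (htop : (⊤ : A) ∈ F)
    (hup : ∀ a b : A, a ≤ b → a ∈ F → b ∈ F)
    (hmeet : ∀ a b : A, a ∈ F → b ∈ F → a ⊓ b ∈ F)
    {s : A} (hs : s ∉ F) :
    ∃ y : Set A, IsPrimeIdeal y ∧ s ∈ y ∧ ∀ d ∈ y, d ∉ F := by
  have hPF : Order.IsPFilter F :=
    Order.IsPFilter.of_def ⟨⊤, htop⟩
      (fun a ha b hb => ⟨a ⊓ b, hmeet a b ha hb, inf_le_left, inf_le_right⟩)
      (fun h hm => hup _ _ h hm)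
  set PF : Order.PFilter A := hPF.toPFilter with hPFdef
  have hPFmem : ∀ a : A, a ∈ PF ↔ a ∈ F := fun a => Iff.rfl
  have hdisj : Disjoint (PF : Set A) ((Order.Ideal.principal s : Order.Ideal A) : Set A) := by
    rw [Set.disjoint_left]
    intro a haF hale
    exact hs (hup a s (Order.Ideal.mem_principal.mp hale) ((hPFmem a).mp haF))
  obtain ⟨J, hJp, hIJ, hJF⟩ := DistribLattice.prime_ideal_of_disjoint_filter_ideal hdisj
  refine ⟨(J : Set A), ⟨J.nonempty, ?_, ?_, ?_, ?_⟩, ?_, ?_⟩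
  · exact fun a b h hb => J.lower h hb
  · exact fun a b ha hb => Order.Ideal.sup_mem ha hb
  · exact hJp.toIsProper.ne_univ
  · exact fun a b h => hJp.mem_or_mem h
  · exact hIJ Order.Ideal.mem_principal_self
  · intro d hd hdF
    exact Set.disjoint_left.mp hJF ((hPFmem d).mpr hdF) hd

lemma exists_prime_not_le {a b : A} (h : ¬ a ≤ b) :
    ∃ w : Set A, IsPrimeIdeal w ∧ b ∈ w ∧ a ∉ w := by
  obtain ⟨y, hy, hby, havoid⟩ := exists_prime_avoid {c | a ≤ c} le_top
    (fun c d hcd hc => le_trans hc hcd) (fun c d hc hd => le_inf hc hd) h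
  exact ⟨y, hy, hby, fun haw => havoid a haw le_rfl⟩

lemma le_of_primes {a b : A}
    (h : ∀ w : Set A, IsPrimeIdeal w → b ∈ w → a ∈ w) : a ≤ b := by
  by_contra hc
  obtain ⟨w, hw, hbw, haw⟩ := exists_prime_not_le hc
  exact haw (h w hw hbw)

end Aux
section Backward

open OminusAlgebra

def Fgen (w : Set A) (p : A) : Set A := {d | ∃ e g, p ⊖ e ∈ w ∧ oneg g ∈ w ∧ e ⊓ g ≤ d}

lemma prime_avoid_Fgen (hInv : ∀ a : A, oneg (oneg a) = a) {w : Set A} (hw : IsPrimeIdeal w)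
    {p s : A} (hps : p ⊖ s ∉ w) :
    ∃ y : Set A, IsPrimeIdeal y ∧ s ∈ y ∧ (∀ d ∈ y, p ⊖ d ∉ w) ∧ (∀ d ∈ y, oneg d ∉ w) ∧
      (∀ d ∈ w, oneg d ∉ y) := by
  have hbot := prime_bot_mem hw
  obtain ⟨y, hy, hsy, havoid⟩ := exists_prime_avoid (Fgen w p)
    ⟨⊤, ⊤, by rw [ominus_top]; exact hbot, by rw [oneg_top]; exact hbot, by simp⟩
    (fun a b hab => fun ⟨e, g, h1, h2, hle⟩ => ⟨e, g, h1, h2, le_trans hle hab⟩)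
    (fun a b ha hb => by
      obtain ⟨e1, g1, h11, h12, hle1⟩ := ha
      obtain ⟨e2, g2, h21, h22, hle2⟩ := hb
      refine ⟨e1 ⊓ e2, g1 ⊓ g2, ?_, ?_, ?_⟩
      · rw [ominus_inf]; exact prime_join hw h11 h21
      · rw [oneg_inf]; exact prime_join hw h12 h22
      · exact le_inf (le_trans (inf_le_inf inf_le_left inf_le_left) hle1)
          (le_trans (inf_le_inf inf_le_right inf_le_right) hle2))
    (show s ∉ Fgen w p by
      rintro ⟨e, g, h1, h2, hle⟩
      apply hps
      have hle2 : p ⊖ s ≤ (p ⊖ e) ⊔ oneg g := by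
        calc p ⊖ s ≤ p ⊖ (e ⊓ g) := om_anti p hle
        _ = (p ⊖ e) ⊔ (p ⊖ g) := ominus_inf p e g
        _ ≤ (p ⊖ e) ⊔ oneg g := sup_le_sup_left (om_le_oneg p g) _
      exact prime_down hw hle2 (prime_join hw h1 h2))
  refine ⟨y, hy, hsy, ?_, ?_, ?_⟩
  · exact fun d hd hmem => havoid d hd ⟨d, ⊤, hmem, by rw [oneg_top]; exact hbot, by simp⟩
  · exact fun d hd hmem => havoid d hd ⟨⊤, d, by rw [ominus_top]; exact hbot, hmem, by simp⟩
  · exact fun d hd hmem => havoid _ hmem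
      ⟨⊤, oneg d, by rw [ominus_top]; exact hbot, by rw [hInv]; exact hd, by simp⟩

lemma pplus_down {x y : Set A} (hx : IsPrimeIdeal x) {e e' : A} (h : e' ≤ e)
    (he : e ∈ pplus x y) : e' ∈ pplus x y := by
  obtain ⟨d, hd, hm⟩ := he
  exact ⟨d, hd, prime_down hx (om_mono h d) hm⟩

lemma pplus_join {x y : Set A} (hx : IsPrimeIdeal x) (hy : IsPrimeIdeal y) {e1 e2 : A}
    (h1 : e1 ∈ pplus x y) (h2 : e2 ∈ pplus x y) : e1 ⊔ e2 ∈ pplus x y := by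
  obtain ⟨d1, hd1, hm1⟩ := h1
  obtain ⟨d2, hd2, hm2⟩ := h2
  refine ⟨d1 ⊔ d2, prime_join hy hd1 hd2, ?_⟩
  rw [sup_ominus]
  exact prime_join hx (prime_down hx (om_anti e1 le_sup_left) hm1)
    (prime_down hx (om_anti e2 le_sup_right) hm2)

lemma bw_inv (hi : ∀ w : Set A, IsPrimeIdeal w → ineg (ineg w) = w) (a : A) :
    oneg (oneg a) = a := by
  have key : ∀ w : Set A, IsPrimeIdeal w → (a ∈ w ↔ oneg (oneg a) ∈ w) := by
    intro w hw
    constructor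
    · intro h
      have h2 : a ∈ ineg (ineg w) := (hi w hw).symm ▸ h
      simp only [ineg, Set.mem_setOf_eq, not_not] at h2
      exact h2
    · intro h
      have h2 : a ∈ ineg (ineg w) := by
        simp only [ineg, Set.mem_setOf_eq, not_not]
        exact h
      exact (hi w hw) ▸ h2
  apply le_antisymm
  · exact le_of_primes fun w hw h => (key w hw).mp h
  · exact le_of_primes fun w hw h => (key w hw).mpr h

lemma bw_sub_self (hInv : ∀ a : A, oneg (oneg a) = a)
    (hii : ∀ x y : Set A, IsPrimeIdeal x → IsPrimeIdeal y → domPlus x y → domPlus y x →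
      pplus x y = pplus y x) (a : A) : a ⊖ a = ⊥ := by
  refine le_bot_iff.mp (le_of_primes ?_)
  intro w hw _
  by_contra hno
  obtain ⟨y, hy, hay, c1, c2, c3⟩ := prime_avoid_Fgen hInv hw hno
  have heq := hii w y hw hy (fun d hd => c2 d hd) (fun d hd => c3 d hd)
  have hmem : a ∈ pplus y w := ⟨⊥, prime_bot_mem hw, by rw [ominus_bot]; exact hay⟩
  rw [← heq] at hmem
  obtain ⟨d, hdy, hadw⟩ := hmem
  exact c1 d hdy hadw

lemma bw_Eprime (hInv : ∀ a : A, oneg (oneg a) = a)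
    (hii : ∀ x y : Set A, IsPrimeIdeal x → IsPrimeIdeal y → domPlus x y → domPlus y x →
      pplus x y = pplus y x) (p q : A) : p ⊖ (p ⊖ q) ≤ q := by
  apply le_of_primes
  intro w hw hq
  by_contra hno
  obtain ⟨y, hy, hty, c1, c2, c3⟩ := prime_avoid_Fgen hInv hw hno
  have heq := hii w y hw hy (fun d hd => c2 d hd) (fun d hd => c3 d hd)
  have hmem : p ∈ pplus y w := ⟨q, hq, hty⟩
  rw [← heq] at hmem
  obtain ⟨d, hdy, hm⟩ := hmem
  exact c1 d hdy hm

lemma bw_E1 (hInv : ∀ a : A, oneg (oneg a) = a) (hQ : ∀ a : A, a ⊖ a = ⊥)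
    (hiv : ∀ x y z : Set A, IsPrimeIdeal x → IsPrimeIdeal y → IsPrimeIdeal z →
      domPlus (ineg x) y → domPlus z y → (pplus (ineg x) y ⊆ ineg z ↔ pplus z y ⊆ x))
    (a c : A) : a ≤ oplus (a ⊖ c) c := by
  apply le_of_primes
  intro w hw hXw
  by_contra haw
  have hv : IsPrimeIdeal (ineg w) := ineg_prime hw
  have hntc : oneg (a ⊖ c) ⊖ c ∉ ineg w := fun hmem => hmem hXw
  obtain ⟨y, hy, hcy, c1, c2, c3⟩ := prime_avoid_Fgen hInv hv hntc
  obtain ⟨d0, hd0⟩ := hy.1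
  obtain ⟨z, hz, htz, zavoid⟩ := exists_prime_avoid
    {s : A | ∃ e ∈ pplus (ineg w) y, oneg e ≤ s}
    ⟨⊥, ⟨d0, hd0, by rw [bot_ominus]; exact prime_bot_mem hv⟩, by rw [oneg_bot]⟩
    (fun s1 s2 h12 => fun ⟨e, he, hle⟩ => ⟨e, he, le_trans hle h12⟩)
    (fun s1 s2 hs1 hs2 => by
      obtain ⟨e1, he1, hle1⟩ := hs1
      obtain ⟨e2, he2, hle2⟩ := hs2
      refine ⟨e1 ⊔ e2, pplus_join hv hy he1 he2, ?_⟩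
      rw [oneg_sup]
      exact inf_le_inf hle1 hle2)
    (show a ⊖ c ∉ {s : A | ∃ e ∈ pplus (ineg w) y, oneg e ≤ s} by
      rintro ⟨e, he, hle⟩
      have h1 : oneg (a ⊖ c) ≤ e := by
        have h2 := oneg_anti hle
        rwa [hInv] at h2
      obtain ⟨d, hd, hm⟩ := pplus_down hv h1 he
      exact c1 d hd hm)
  have dom1 : domPlus (ineg w) y := fun d hd => c2 d hd
  have dom2 : domPlus z y := fun d hd hmem =>
    zavoid (oneg d) hmem ⟨d, ⟨d, hd, by rw [hQ]; exact prime_bot_mem hv⟩, le_rfl⟩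
  have hLHS : pplus (ineg w) y ⊆ ineg z :=
    fun e he hmem => zavoid (oneg e) hmem ⟨e, he, le_rfl⟩
  have hRHS := (hiv w y z hw hy hz dom1 dom2).mp hLHS
  exact haw (hRHS ⟨c, hcy, htz⟩)

lemma bw_E2 (hInv : ∀ a : A, oneg (oneg a) = a)
    (hE1 : ∀ a c : A, a ≤ oplus (a ⊖ c) c) (b c : A) : oplus b c ⊖ c ≤ b := by
  have h2 := oneg_anti (hE1 (oneg b) c)
  rw [hInv] at h2
  have h3 : oneg (oplus (oneg b ⊖ c) c) = oplus b c ⊖ c := by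
    unfold oplus
    rw [hInv]
  rwa [h3] at h2

lemma bw_comm' (hInv : ∀ a : A, oneg (oneg a) = a)
    (hE2 : ∀ b c : A, oplus b c ⊖ c ≤ b)
    (hE' : ∀ p q : A, p ⊖ (p ⊖ q) ≤ q)
    (hii : ∀ x y : Set A, IsPrimeIdeal x → IsPrimeIdeal y → domPlus x y → domPlus y x →
      pplus x y = pplus y x) (a b : A) : oneg a ⊖ b ≤ oneg b ⊖ a := by
  apply le_of_primes
  intro w hw hmemw
  by_contra hno
  obtain ⟨y, hy, hby, c1, c2, c3⟩ := prime_avoid_Fgen hInv hw hno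
  have heq := hii w y hw hy (fun d hd => c2 d hd) (fun d hd => c3 d hd)
  have hkey : oneg a ⊖ (oneg b ⊖ a) ≤ b := by
    have h2 : oneg a ≤ oplus b (oneg b ⊖ a) := oneg_anti (hE' (oneg b) a)
    calc oneg a ⊖ (oneg b ⊖ a) ≤ oplus b (oneg b ⊖ a) ⊖ (oneg b ⊖ a) := om_mono h2 _
    _ ≤ b := hE2 b _
  have hmem : oneg a ∈ pplus y w := ⟨oneg b ⊖ a, hmemw, prime_down hy hkey hby⟩
  rw [← heq] at hmem
  obtain ⟨d, hdy, hm⟩ := hmem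
  exact c1 d hdy hm

end Backward
section Main

open OminusAlgebra

lemma oneg_oplus (hInv : ∀ a : A, oneg (oneg a) = a) (u v : A) :
    oneg (oplus u v) = oneg u ⊖ v := by
  unfold oplus; rw [hInv]

lemma bw_A1 (hInv : ∀ a : A, oneg (oneg a) = a) (hQ : ∀ a : A, a ⊖ a = ⊥)
    (hE1 : ∀ a c : A, a ≤ oplus (a ⊖ c) c)
    (hcomm : ∀ a b : A, oneg a ⊖ b = oneg b ⊖ a)
    (hiii : ∀ x y z : Set A, IsPrimeIdeal x → IsPrimeIdeal y → IsPrimeIdeal z →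
      domPlus x y → domPlus y z → domPlus x (pplus y z) → domPlus (pplus x y) z →
      pplus x (pplus y z) = pplus (pplus x y) z)
    (p b c : A) : p ⊖ oplus b c ≤ (p ⊖ b) ⊖ c := by
  apply le_of_primes
  intro w hw hL
  by_contra hR
  have hbotw := prime_bot_mem hw
  have hoc : ∀ u v : A, oplus u v = oplus v u := fun u v => congrArg oneg (hcomm u v)
  obtain ⟨z, hz, hbz, zavoid⟩ := exists_prime_avoid
    {f : A | ∃ m, p ⊖ oplus c m ∈ w ∧ m ≤ f}
    ⟨⊤, by rw [oplus_top, ominus_top]; exact hbotw, le_rfl⟩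
    (fun f1 f2 h12 => fun ⟨m, hm, hmf⟩ => ⟨m, hm, le_trans hmf h12⟩)
    (fun f1 f2 hf1 hf2 => by
      obtain ⟨m1, hm1, hle1⟩ := hf1
      obtain ⟨m2, hm2, hle2⟩ := hf2
      refine ⟨m1 ⊓ m2, ?_, inf_le_inf hle1 hle2⟩
      rw [oplus_inf_right, ominus_inf]
      exact prime_join hw hm1 hm2)
    (show b ∉ {f : A | ∃ m, p ⊖ oplus c m ∈ w ∧ m ≤ f} by
      rintro ⟨m, hm, hmb⟩
      apply hR
      have h1 : p ⊖ oplus b c ≤ p ⊖ oplus c m := by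
        rw [hoc b c]
        exact om_anti p (oplus_mono_right c hmb)
      exact prime_down hw h1 hm)
  have zc1 : ∀ f ∈ z, p ⊖ oplus c f ∉ w := fun f hf hmem => zavoid f hf ⟨f, hmem, le_rfl⟩
  obtain ⟨y, hy, hcy, yavoid⟩ := exists_prime_avoid
    {d : A | ∃ f ∈ z, p ⊖ oplus d f ∈ w}
    ⟨b, hbz, by rw [top_oplus, ominus_top]; exact hbotw⟩
    (fun d1 d2 h12 => fun ⟨f, hf, hm⟩ =>
      ⟨f, hf, prime_down hw (om_anti p (oplus_mono_left h12 f)) hm⟩)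
    (fun d1 d2 hd1 hd2 => by
      obtain ⟨f1, hf1, hm1⟩ := hd1
      obtain ⟨f2, hf2, hm2⟩ := hd2
      refine ⟨f1 ⊔ f2, prime_join hz hf1 hf2, ?_⟩
      rw [oplus_inf_left, ominus_inf]
      exact prime_join hw
        (prime_down hw (om_anti p (oplus_mono_right d1 le_sup_left)) hm1)
        (prime_down hw (om_anti p (oplus_mono_right d2 le_sup_right)) hm2))
    (show c ∉ {d : A | ∃ f ∈ z, p ⊖ oplus d f ∈ w} by
      rintro ⟨f, hf, hm⟩
      exact zc1 f hf hm)
  have yav : ∀ d ∈ y, ∀ f ∈ z, p ⊖ oplus d f ∉ w :=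
    fun d hd f hf hm => yavoid d hd ⟨f, hf, hm⟩
  have dom1 : domPlus w y := by
    intro d hd
    show oneg d ∉ w
    intro hng
    apply yav d hd b hbz
    have h1 : p ⊖ oplus d b ≤ oneg d := by
      calc p ⊖ oplus d b ≤ oneg (oplus d b) := om_le_oneg _ _
      _ = oneg d ⊖ b := oneg_oplus hInv d b
      _ ≤ oneg d := om_le_left _ _
    exact prime_down hw h1 hng
  have dom2 : domPlus y z := by
    intro f hf
    show oneg f ∉ y
    intro hmem
    apply yavoid (oneg f) hmem
    refine ⟨f, hf, ?_⟩
    have h1 : oplus (oneg f) f = ⊤ := by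
      unfold oplus
      rw [hInv, hQ, oneg_bot]
    rw [h1, ominus_top]
    exact hbotw
  have dom3 : domPlus w (pplus y z) := by
    rintro e ⟨f, hf, hd⟩
    show oneg e ∉ w
    intro hne
    apply yav (e ⊖ f) hd f hf
    have h1 : p ⊖ oplus (e ⊖ f) f ≤ oneg e := by
      calc p ⊖ oplus (e ⊖ f) f ≤ oneg (oplus (e ⊖ f) f) := om_le_oneg _ _
      _ ≤ oneg e := oneg_anti (hE1 e f)
    exact prime_down hw h1 hne
  have dom4 : domPlus (pplus w y) z := by
    intro f hf
    show oneg f ∉ pplus w y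
    rintro ⟨d, hd, hm⟩
    apply yav d hd f hf
    have h1 : p ⊖ oplus d f ≤ oneg f ⊖ d := by
      calc p ⊖ oplus d f ≤ oneg (oplus d f) := om_le_oneg _ _
      _ = oneg d ⊖ f := oneg_oplus hInv d f
      _ = oneg f ⊖ d := hcomm d f
    exact prime_down hw h1 hm
  have heq := hiii w y z hw hy hz dom1 dom2 dom3 dom4
  have hmem : p ∈ pplus (pplus w y) z := ⟨b, hbz, ⟨c, hcy, hL⟩⟩
  rw [← heq] at hmem
  obtain ⟨e, ⟨f, hf, hd⟩, hpe⟩ := hmem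
  apply yav (e ⊖ f) hd f hf
  exact prime_down hw (om_anti p (hE1 e f)) hpe

end Main

theorem stmt2 {A : Type*} [OminusAlgebra A] :
    ((∀ a : A, oneg (oneg a) = a) ∧
     (∀ a b : A, oplus a b = oplus b a) ∧
     (∀ a b c : A, oplus (oplus a b) c = oplus a (oplus b c)) ∧
     (∀ a b c : A, a ≤ oplus b c ↔ a ⊖ c ≤ b)) ↔
    (∀ x y z : Set A, IsPrimeIdeal x → IsPrimeIdeal y → IsPrimeIdeal z →
      (ineg (ineg x) = x) ∧
      (domPlus x y → domPlus y x → pplus x y = pplus y x) ∧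
      (domPlus x y → domPlus y z → domPlus x (pplus y z) → domPlus (pplus x y) z →
        pplus x (pplus y z) = pplus (pplus x y) z) ∧
      (domPlus (ineg x) y → domPlus z y →
        (pplus (ineg x) y ⊆ ineg z ↔ pplus z y ⊆ x))) := by
  constructor
  · rintro ⟨hInv, hComm, hAssoc, hAdj⟩ x y z hx hy hz
    have E1f : ∀ a c : A, a ≤ oplus (a ⊖ c) c := fun a c => (hAdj a (a ⊖ c) c).mpr le_rfl
    have E2f : ∀ b c : A, oplus b c ⊖ c ≤ b := fun b c => (hAdj (oplus b c) b c).mp le_rfl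
    have adj2 : ∀ d b c e : A, ((d ⊖ c) ⊖ b ≤ e) ↔ (d ⊖ oplus b c ≤ e) := by
      intro d b c e
      rw [← hAdj d e (oplus b c), ← hAssoc e b c, hAdj d (oplus e b) c, hAdj (d ⊖ c) e b]
    have Gf : ∀ d b c : A, d ⊖ oplus b c = (d ⊖ c) ⊖ b := fun d b c =>
      le_antisymm ((adj2 d b c _).mp le_rfl) ((adj2 d b c _).mpr le_rfl)
    refine ⟨?_, ?_, ?_, ?_⟩
    · ext a
      simp only [ineg, Set.mem_setOf_eq, not_not, hInv]
    · intro _ _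
      have key : ∀ a b : A, a ⊖ (a ⊖ b) ≤ b := fun a b =>
        (hAdj a b (a ⊖ b)).mp (by rw [hComm]; exact E1f a b)
      ext a
      constructor
      · rintro ⟨b, hb, hab⟩
        exact ⟨a ⊖ b, hab, prime_down hy (key a b) hb⟩
      · rintro ⟨b, hb, hab⟩
        exact ⟨a ⊖ b, hab, prime_down hx (key a b) hb⟩
    · intro _ _ _ _
      ext a
      constructor
      · rintro ⟨e, ⟨c', hc', hec⟩, hae⟩
        refine ⟨c', hc', e ⊖ c', hec, ?_⟩
        apply prime_down hx ?_ hae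
        rw [← Gf a (e ⊖ c') c']
        exact om_anti a (E1f e c')
      · rintro ⟨c', hc', b', hb', hab⟩
        refine ⟨oplus b' c', ⟨c', hc', prime_down hy (E2f b' c') hb'⟩, ?_⟩
        rw [Gf]
        exact hab
    · intro _ _
      constructor
      · intro hInc a2 hmem2
        obtain ⟨b, hb, habz⟩ := hmem2
        have hnm : oneg (a2 ⊖ b) ∉ pplus (ineg x) y := by
          intro hmem
          have h3 := hInc hmem
          rw [mem_ineg, hInv] at h3
          exact h3 habz
        have h4 : oneg (a2 ⊖ b) ⊖ b ∉ ineg x := fun hmem => hnm ⟨b, hb, hmem⟩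
        rw [mem_ineg, not_not] at h4
        exact prime_down hx (E1f a2 b) h4
      · intro hInc2 a2 hmem2
        obtain ⟨b, hb, habi⟩ := hmem2
        intro hnz
        apply habi
        apply hInc2
        refine ⟨b, hb, ?_⟩
        apply prime_down hz ?_ hnz
        have h5 := oneg_anti (E1f a2 b)
        rwa [oneg_oplus hInv] at h5
  · intro H
    have hi : ∀ w : Set A, IsPrimeIdeal w → ineg (ineg w) = w :=
      fun w hw => (H w w w hw hw hw).1
    have hii : ∀ x y : Set A, IsPrimeIdeal x → IsPrimeIdeal y → domPlus x y → domPlus y x →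
        pplus x y = pplus y x := fun x y hx hy => (H x y y hx hy hy).2.1
    have hiii : ∀ x y z : Set A, IsPrimeIdeal x → IsPrimeIdeal y → IsPrimeIdeal z →
        domPlus x y → domPlus y z → domPlus x (pplus y z) → domPlus (pplus x y) z →
        pplus x (pplus y z) = pplus (pplus x y) z :=
      fun x y z hx hy hz => (H x y z hx hy hz).2.2.1
    have hiv : ∀ x y z : Set A, IsPrimeIdeal x → IsPrimeIdeal y → IsPrimeIdeal z →
        domPlus (ineg x) y → domPlus z y → (pplus (ineg x) y ⊆ ineg z ↔ pplus z y ⊆ x) :=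
      fun x y z hx hy hz => (H x y z hx hy hz).2.2.2
    have hInv := bw_inv hi
    have hQ := bw_sub_self hInv hii
    have hE' := bw_Eprime hInv hii
    have hE1 := bw_E1 hInv hQ hiv
    have hE2 := bw_E2 hInv hE1
    have hcm' := bw_comm' hInv hE2 hE' hii
    have hcomm : ∀ a b : A, oneg a ⊖ b = oneg b ⊖ a :=
      fun a b => le_antisymm (hcm' a b) (hcm' b a)
    have hComm : ∀ a b : A, oplus a b = oplus b a := fun a b => congrArg oneg (hcomm a b)
    have hA1 := bw_A1 hInv hQ hE1 hcomm hiii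
    have hASC : ∀ a b c : A, oplus (oplus a b) c ≤ oplus a (oplus b c) := by
      intro a b c
      have h1 := hA1 (oneg a) b c
      have e1 : oplus (oplus a b) c = oneg ((oneg a ⊖ b) ⊖ c) := by
        unfold oplus
        rw [hInv]
      have e2 : oplus a (oplus b c) = oneg (oneg a ⊖ oplus b c) := rfl
      rw [e1, e2]
      exact oneg_anti h1
    refine ⟨hInv, hComm, ?_, ?_⟩
    · intro a b c
      refine le_antisymm (hASC a b c) ?_
      calc oplus a (oplus b c) = oplus (oplus b c) a := hComm a _
      _ ≤ oplus b (oplus c a) := hASC b c a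
      _ = oplus (oplus c a) b := hComm b _
      _ ≤ oplus c (oplus a b) := hASC c a b
      _ = oplus (oplus a b) c := hComm c _
    · intro a b c
      constructor
      · intro h
        calc a ⊖ c ≤ oplus b c ⊖ c := om_mono h c
        _ ≤ b := hE2 b c
      · intro h
        calc a ≤ oplus (a ⊖ c) c := hE1 a c
        _ ≤ oplus b c := oplus_mono_left h c
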